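/- Let v, w : Fin n → EuclideanSpace ℝ (Fin D) be two finite point configurations with equal pairwise distances, i.e. dist (v i) (v j) = dist (w i) (w j) for all i, j. Then there exists an affine isometry equivalence e of EuclideanSpace ℝ (Fin D) (a rigid motion, possibly including a reflection) such that e (v i) = w i for every i. In other words, the coordinates of a finite configuration of particles are determined by their distance matrix up to a Euclidean isometry. -/

import Mathlib

/-!
Fix a base point `v k`. By polarization, the distances of the configuration determine the Gram
matrix of the difference vectors `v i -ᵥ v k`, and the Gram matrix determines the norm of every
linear combination of these vectors. Hence `∑ c i • (v i -ᵥ v k) ↦ ∑ c i • (w i -ᵥ w k)`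
is a well-defined linear isometry on their span, which extends to a linear isometry of the whole
(finite-dimensional) space; conjugating by the translations to `v k` and `w k` gives the
rigid motion.
-/

open Matrix
open scoped RealInnerProductSpace Congruent

section LinearIsometryOfNormEq

variable {R M E F : Type*} [Ring R] [AddCommGroup M] [Module R M]
  [SeminormedAddCommGroup E] [Module R E] [NormedAddCommGroup F] [Module R F]

theorem LinearMap.exists_linearIsometry_of_norm_eq (A : M →ₗ[R] E) (B : M →ₗ[R] F)
    (h : ∀ c, ‖A c‖ = ‖B c‖) :
    ∃ L : LinearMap.range A →ₗᵢ[R] F,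
      ∀ c, L ⟨A c, LinearMap.mem_range_self A c⟩ = B c := by
  have hker : LinearMap.ker A ≤ LinearMap.ker B := fun c hc ↦ by
    rw [LinearMap.mem_ker] at hc ⊢
    rw [← norm_eq_zero, ← h, hc, norm_zero]
  let f := (LinearMap.ker A).liftQ B hker ∘ₗ A.quotKerEquivRange.symm.toLinearMap
  have hf : ∀ c, f ⟨A c, LinearMap.mem_range_self A c⟩ = B c := fun c ↦ by
    simp [f, LinearMap.quotKerEquivRange_symm_apply_image]
  refine ⟨⟨f, ?_⟩, hf⟩
  rintro ⟨_, c, rfl⟩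
  exact (congrArg norm (hf c)).trans (h c).symm

end LinearIsometryOfNormEq

section GramMatrix

variable {𝕜 ι E F : Type*} [RCLike 𝕜] [Fintype ι]
  [NormedAddCommGroup E] [InnerProductSpace 𝕜 E]
  [NormedAddCommGroup F] [InnerProductSpace 𝕜 F]

theorem norm_linearCombination_eq_of_gram_eq {v : ι → E} {w : ι → F}
    (h : gram 𝕜 v = gram 𝕜 w) (c : ι → 𝕜) :
    ‖Fintype.linearCombination 𝕜 v c‖ = ‖Fintype.linearCombination 𝕜 w c‖ := by
  have hinner := (star_dotProduct_gram_mulVec v c c).symm.trans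
    (h ▸ star_dotProduct_gram_mulVec w c c)
  rw [← sq_eq_sq₀ (norm_nonneg _) (norm_nonneg _), Fintype.linearCombination_apply,
    Fintype.linearCombination_apply, @norm_sq_eq_re_inner 𝕜, @norm_sq_eq_re_inner 𝕜, hinner]

theorem exists_linearIsometryEquiv_of_gram_eq [FiniteDimensional 𝕜 E] {v w : ι → E}
    (h : gram 𝕜 v = gram 𝕜 w) : ∃ e : E ≃ₗᵢ[𝕜] E, ∀ i, e (v i) = w i := by
  classical
  obtain ⟨L, hL⟩ := LinearMap.exists_linearIsometry_of_norm_eq _ _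
    (norm_linearCombination_eq_of_gram_eq h)
  refine ⟨L.extend.toLinearIsometryEquiv rfl, fun i ↦ ?_⟩
  have hv := Fintype.linearCombination_apply_single 𝕜 v i 1
  have hw := Fintype.linearCombination_apply_single 𝕜 w i 1
  rw [one_smul] at hv hw
  rw [LinearIsometry.coe_toLinearIsometryEquiv, ← hv, ← hw, ← hL]
  exact LinearIsometry.extend_apply L ⟨_, LinearMap.mem_range_self _ _⟩

end GramMatrix

section Congruent

variable {ι V P : Type*} [NormedAddCommGroup V] [InnerProductSpace ℝ V] [MetricSpace P]
  [NormedAddTorsor V P]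

theorem Congruent.gram_vsub_eq {v w : ι → P} (h : v ≅ w) (k : ι) :
    gram ℝ (fun i ↦ v i -ᵥ v k) = gram ℝ (fun i ↦ w i -ᵥ w k) := by
  ext i j
  simp only [gram_apply,
    real_inner_eq_norm_mul_self_add_norm_mul_self_sub_norm_sub_mul_self_div_two,
    vsub_sub_vsub_cancel_right, ← dist_eq_norm_vsub V, h.dist_eq]

theorem Congruent.exists_affineIsometryEquiv [FiniteDimensional ℝ V] [Finite ι] {v w : ι → P}
    (h : v ≅ w) : ∃ e : P ≃ᵃⁱ[ℝ] P, ∀ i, e (v i) = w i := by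
  rcases isEmpty_or_nonempty ι with _ | ⟨⟨k⟩⟩
  · exact ⟨AffineIsometryEquiv.refl ℝ P, isEmptyElim⟩
  have := Fintype.ofFinite ι
  obtain ⟨L, hL⟩ := exists_linearIsometryEquiv_of_gram_eq (h.gram_vsub_eq k)
  refine ⟨(AffineIsometryEquiv.vaddConst ℝ (v k)).symm.trans
    (L.toAffineIsometryEquiv.trans (AffineIsometryEquiv.vaddConst ℝ (w k))), fun i ↦ ?_⟩
  simp [hL]

end Congruent

/-- Two finite point configurations with equal pairwise distances are related by a
Euclidean isometry (rigid motion, possibly with reflection). -/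
theorem exists_affineIsometryEquiv_of_dist_eq (n D : ℕ)
    (v w : Fin n → EuclideanSpace ℝ (Fin D))
    (h : ∀ i j, dist (v i) (v j) = dist (w i) (w j)) :
    ∃ e : EuclideanSpace ℝ (Fin D) ≃ᵃⁱ[ℝ] EuclideanSpace ℝ (Fin D),
      ∀ i, e (v i) = w i :=
  (Congruent.of_dist_eq h).exists_affineIsometryEquiv
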